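/- arXiv:1701.09096 — 3 statements merged into one kernel-verified Lean document; each statement's English description precedes it below -/
import Mathlib

section
/- Let (Y₁, d₁) and (Y₂, d₂) be metric spaces with product Y = Y₁ × Y₂ carrying the ℓ² product metric. Fix μ₁, μ₂ ∈ [0,1] with μ₁² + μ₂² = 1, base points o₁ ∈ Y₁, o₂ ∈ Y₂, and geodesic rays γ₁, γ̂₁ from o₁ in Y₁ and γ₂, γ̂₂ from o₂ in Y₂ (unit speed). Suppose lim_{t→∞} (2μᵢt − dᵢ(γᵢ(μᵢ t), γ̂ᵢ(μᵢ t))) = 2aᵢ exists and is finite for i = 1, 2. Then lim_{t→∞} (t − (1/2)·√(d₁(γ₁(μ₁t), γ̂₁(μ₁t))² + d₂(γ₂(μ₂t), γ̂₂(μ₂t))²)) = μ₁a₁ + μ₂a₂. -/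
/-!
In a real inner product space the Busemann function of the unit-speed ray `t ↦ t • u` is
`x ↦ -⟪u, x⟫`: for `t > 0`, `‖t • u + b‖ - t = t (‖u + t⁻¹ • b‖ - ‖u‖)` is a difference quotient
of `s ↦ ‖u + s • b‖` at `0`, whose derivative there is `⟪u, b⟫`. An `o(1)` perturbation of
`t • u + b` changes the norm by `o(1)`. Applied in `ℝ²` to `w t = ½ (d₁ t, d₂ t)` and
`u = (μ₁, μ₂)`, the hypotheses say `w t - t • u → -(a₁, a₂)`, which gives the limit
`μ₁ a₁ + μ₂ a₂`.
-/

open Filter Topology RealInnerProductSpace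

section BusemannFunction

variable {E : Type*} [NormedAddCommGroup E] [InnerProductSpace ℝ E]

theorem hasDerivAt_norm_add_smul {u : E} (hu : u ≠ 0) (b : E) :
    HasDerivAt (fun s : ℝ => ‖u + s • b‖) (⟪u, b⟫ / ‖u‖) 0 := by
  have hline : HasDerivAt (fun s : ℝ => u + s • b) b 0 := by
    simpa using ((hasDerivAt_id (0 : ℝ)).smul_const b).const_add u
  have := hline.norm_sq.sqrt (by simpa using hu)
  simp only [zero_smul, add_zero, Real.sqrt_sq (norm_nonneg _)] at this
  rwa [mul_div_mul_left _ _ two_ne_zero] at this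

theorem tendsto_norm_smul_add_sub {u : E} (hu : ‖u‖ = 1) (b : E) :
    Tendsto (fun t : ℝ => ‖t • u + b‖ - t) atTop (𝓝 ⟪u, b⟫) := by
  have hu0 : u ≠ 0 := norm_ne_zero_iff.1 (by rw [hu]; exact one_ne_zero)
  have hderiv := hasDerivAt_norm_add_smul hu0 b
  rw [hu, div_one] at hderiv
  refine (hderiv.tendsto_slope_zero_right.comp tendsto_inv_atTop_nhdsGT_zero).congr' ?_
  filter_upwards [eventually_gt_atTop 0] with t ht
  have hfactor : t • u + b = t • (u + t⁻¹ • b) := by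
    rw [smul_add, smul_smul, mul_inv_cancel₀ ht.ne', one_smul]
  simp only [Function.comp_apply, inv_inv, zero_add, zero_smul, add_zero, hu, smul_eq_mul]
  rw [hfactor, norm_smul, Real.norm_of_nonneg ht.le]
  ring

theorem tendsto_norm_sub_of_tendsto_sub_smul {w : ℝ → E} {u b : E} (hu : ‖u‖ = 1)
    (hw : Tendsto (fun t => w t - t • u) atTop (𝓝 b)) :
    Tendsto (fun t => ‖w t‖ - t) atTop (𝓝 ⟪u, b⟫) := by
  have hclose : Tendsto (fun t => ‖w t‖ - ‖t • u + b‖) atTop (𝓝 0) := by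
    refine squeeze_zero_norm (fun t => abs_norm_sub_norm_le _ _) ?_
    simpa [sub_add_eq_sub_sub] using tendsto_iff_norm_sub_tendsto_zero.1 hw
  simpa using hclose.add (tendsto_norm_smul_add_sub hu b)

end BusemannFunction

theorem EuclideanSpace.norm_vec_two (x y : ℝ) : ‖!₂[x, y]‖ = √(x ^ 2 + y ^ 2) := by
  simp [EuclideanSpace.norm_eq, Fin.sum_univ_two]

theorem EuclideanSpace.inner_vec_two (x y a b : ℝ) : ⟪!₂[x, y], !₂[a, b]⟫ = x * a + y * b := by
  simp only [PiLp.inner_apply, RCLike.inner_apply, Real.ringHom_apply, Fin.sum_univ_two,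
    Matrix.cons_val_zero, Matrix.cons_val_one, Matrix.cons_val_fin_one]
  ring

theorem Filter.Tendsto.euclideanSpace_two {α : Type*} {l : Filter α} {f g : α → ℝ} {x y : ℝ}
    (hf : Tendsto f l (𝓝 x)) (hg : Tendsto g l (𝓝 y)) :
    Tendsto (fun t => !₂[f t, g t]) l (𝓝 !₂[x, y]) :=
  (PiLp.continuous_toLp 2 _).continuousAt.tendsto.comp
    (tendsto_pi_nhds.2 (Fin.forall_fin_two.2 ⟨hf, hg⟩))

theorem tendsto_sub_half_sqrt_sq_add_sq {μ₁ μ₂ a₁ a₂ : ℝ} {d₁ d₂ : ℝ → ℝ}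
    (hμ : μ₁ ^ 2 + μ₂ ^ 2 = 1)
    (h₁ : Tendsto (fun t => 2 * μ₁ * t - d₁ t) atTop (𝓝 (2 * a₁)))
    (h₂ : Tendsto (fun t => 2 * μ₂ * t - d₂ t) atTop (𝓝 (2 * a₂))) :
    Tendsto (fun t => t - 1 / 2 * √(d₁ t ^ 2 + d₂ t ^ 2)) atTop (𝓝 (μ₁ * a₁ + μ₂ * a₂)) := by
  have hcoord (μ a : ℝ) (d : ℝ → ℝ) (h : Tendsto (fun t => 2 * μ * t - d t) atTop (𝓝 (2 * a))) :
      Tendsto (fun t => 2⁻¹ * d t - t * μ) atTop (𝓝 (-a)) := by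
    convert h.div_const (-2) using 2 <;> ring
  have hu : ‖!₂[μ₁, μ₂]‖ = 1 := by rw [EuclideanSpace.norm_vec_two, hμ, Real.sqrt_one]
  have hw : Tendsto (fun t => (2⁻¹ : ℝ) • !₂[d₁ t, d₂ t] - t • !₂[μ₁, μ₂]) atTop
      (𝓝 !₂[-a₁, -a₂]) := by
    convert (hcoord μ₁ a₁ d₁ h₁).euclideanSpace_two (hcoord μ₂ a₂ d₂ h₂) using 2 with t
    ext i
    fin_cases i <;> simp
  convert (tendsto_norm_sub_of_tendsto_sub_smul hu hw).neg using 2 with t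
  · rw [norm_smul, EuclideanSpace.norm_vec_two, Real.norm_of_nonneg (by norm_num)]
    ring
  · rw [EuclideanSpace.inner_vec_two]
    ring

theorem gromov_product_product_space_general {Y₁ Y₂ : Type*} [MetricSpace Y₁] [MetricSpace Y₂]
    (μ₁ μ₂ : ℝ)
    (hμ : μ₁^2 + μ₂^2 = 1)
    (γ₁ γ₁' : ℝ → Y₁) (γ₂ γ₂' : ℝ → Y₂)
    (a₁ a₂ : ℝ)
    (h₁ : Tendsto (fun t : ℝ => 2*μ₁*t - dist (γ₁ (μ₁*t)) (γ₁' (μ₁*t))) atTop (nhds (2*a₁)))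
    (h₂ : Tendsto (fun t : ℝ => 2*μ₂*t - dist (γ₂ (μ₂*t)) (γ₂' (μ₂*t))) atTop (nhds (2*a₂))) :
    Tendsto (fun t : ℝ => t - (1/2) *
        Real.sqrt ((dist (γ₁ (μ₁*t)) (γ₁' (μ₁*t)))^2 + (dist (γ₂ (μ₂*t)) (γ₂' (μ₂*t)))^2))
      atTop (nhds (μ₁*a₁ + μ₂*a₂)) :=
  tendsto_sub_half_sqrt_sq_add_sq hμ h₁ h₂

/-- The Gromov product on the ideal boundary of an `ℓ²` product of two metric spaces
decomposes as `μ₁ a₁ + μ₂ a₂`, where `aᵢ` are the Gromov products in the factors. -/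
theorem gromov_product_product_space {Y₁ Y₂ : Type*} [MetricSpace Y₁] [MetricSpace Y₂]
    (μ₁ μ₂ : ℝ) (hμ₁ : μ₁ ∈ Set.Icc (0:ℝ) 1) (hμ₂ : μ₂ ∈ Set.Icc (0:ℝ) 1)
    (hμ : μ₁^2 + μ₂^2 = 1)
    (o₁ : Y₁) (o₂ : Y₂) (γ₁ γ₁' : ℝ → Y₁) (γ₂ γ₂' : ℝ → Y₂)
    (hγ₁0 : γ₁ 0 = o₁) (hγ₁'0 : γ₁' 0 = o₁) (hγ₂0 : γ₂ 0 = o₂) (hγ₂'0 : γ₂' 0 = o₂)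
    (hγ₁ : ∀ s t : ℝ, 0 ≤ s → 0 ≤ t → dist (γ₁ s) (γ₁ t) = |s - t|)
    (hγ₁' : ∀ s t : ℝ, 0 ≤ s → 0 ≤ t → dist (γ₁' s) (γ₁' t) = |s - t|)
    (hγ₂ : ∀ s t : ℝ, 0 ≤ s → 0 ≤ t → dist (γ₂ s) (γ₂ t) = |s - t|)
    (hγ₂' : ∀ s t : ℝ, 0 ≤ s → 0 ≤ t → dist (γ₂' s) (γ₂' t) = |s - t|)
    (a₁ a₂ : ℝ)
    (h₁ : Tendsto (fun t : ℝ => 2*μ₁*t - dist (γ₁ (μ₁*t)) (γ₁' (μ₁*t))) atTop (nhds (2*a₁)))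
    (h₂ : Tendsto (fun t : ℝ => 2*μ₂*t - dist (γ₂ (μ₂*t)) (γ₂' (μ₂*t))) atTop (nhds (2*a₂))) :
    Tendsto (fun t : ℝ => t - (1/2) *
        Real.sqrt ((dist (γ₁ (μ₁*t)) (γ₁' (μ₁*t)))^2 + (dist (γ₂ (μ₂*t)) (γ₂' (μ₂*t)))^2))
      atTop (nhds (μ₁*a₁ + μ₂*a₂)) :=
  gromov_product_product_space_general μ₁ μ₂ hμ γ₁ γ₁' γ₂ γ₂' a₁ a₂ h₁ h₂
end

section
/- In ℍ² × ℍ² with the ℓ² product metric, let α ∈ [0, π/2), base point o = (o₁, o₂), and boundary points x = (x₁, x₂, α), y = (y₁, y₂, α) parametrized so the ray from o to x is t ↦ (γ_{o₁x₁}(cos(α)t), γ_{o₂x₂}(sin(α)t)). If the rank-one Gromov products (x₁|y₁)_{o₁} and (x₂|y₂)_{o₂} are finite, then (x|y)_{o,α} = cos(α)·(x₁|y₁)_{o₁} + sin(α)·(x₂|y₂)_{o₂}. -/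
open Filter Real

lemma aux_gromov_limit (c s b₁ b₂ : ℝ) (hcs : c^2 + s^2 = 1) (p q : ℝ → ℝ)
    (hp : Tendsto (fun t => c*t - p t) atTop (nhds b₁))
    (hq : Tendsto (fun t => s*t - q t) atTop (nhds b₂)) :
    Tendsto (fun t => t - Real.sqrt ((p t)^2 + (q t)^2)) atTop
      (nhds (c*b₁ + s*b₂)) := by
  have ht0 : ∀ᶠ t : ℝ in atTop, (0:ℝ) < t := eventually_gt_atTop 0
  -- p t / t → c
  have hpt : Tendsto (fun t => p t * t⁻¹) atTop (nhds c) := by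
    have h1 : Tendsto (fun t => c - (c*t - p t) * t⁻¹) atTop (nhds (c - b₁ * 0)) :=
      tendsto_const_nhds.sub (hp.mul tendsto_inv_atTop_zero)
    rw [show c - b₁ * 0 = c by ring] at h1
    refine h1.congr' ?_
    filter_upwards [ht0] with t ht
    field_simp
    ring
  have hqt : Tendsto (fun t => q t * t⁻¹) atTop (nhds s) := by
    have h1 : Tendsto (fun t => s - (s*t - q t) * t⁻¹) atTop (nhds (s - b₂ * 0)) :=
      tendsto_const_nhds.sub (hq.mul tendsto_inv_atTop_zero)
    rw [show s - b₂ * 0 = s by ring] at h1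
    refine h1.congr' ?_
    filter_upwards [ht0] with t ht
    field_simp
    ring
  -- r t / t → 1
  have hr : Tendsto (fun t => Real.sqrt ((p t)^2 + (q t)^2) * t⁻¹) atTop (nhds 1) := by
    have h1 : Tendsto (fun t => Real.sqrt ((p t * t⁻¹)^2 + (q t * t⁻¹)^2)) atTop
        (nhds (Real.sqrt (c^2 + s^2))) :=
      (Real.continuous_sqrt.tendsto _).comp ((hpt.pow 2).add (hqt.pow 2))
    rw [hcs, Real.sqrt_one] at h1
    refine h1.congr' ?_
    filter_upwards [ht0] with t ht
    rw [show (p t * t⁻¹)^2 + (q t * t⁻¹)^2 = ((p t)^2 + (q t)^2) * (t⁻¹)^2 by ring,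
      Real.sqrt_mul (by positivity), Real.sqrt_sq (by positivity)]
  -- numerator / t → 2L
  have hN : Tendsto (fun t => (t^2 - (p t)^2 - (q t)^2) * t⁻¹) atTop
      (nhds (2*(c*b₁ + s*b₂))) := by
    have h1 : Tendsto (fun t => 2*(c*(c*t - p t) + s*(s*t - q t))
        - ((c*t - p t)^2 + (s*t - q t)^2) * t⁻¹) atTop
        (nhds (2*(c*b₁ + s*b₂) - (b₁^2 + b₂^2) * 0)) :=
      (((hp.const_mul c).add (hq.const_mul s)).const_mul 2).sub
        (((hp.pow 2).add (hq.pow 2)).mul tendsto_inv_atTop_zero)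
    rw [show 2*(c*b₁ + s*b₂) - (b₁^2 + b₂^2) * 0 = 2*(c*b₁ + s*b₂) by ring] at h1
    refine h1.congr' ?_
    filter_upwards [ht0] with t ht
    have ht' : t ≠ 0 := ne_of_gt ht
    field_simp
    ring_nf
    nlinarith [hcs, sq_nonneg t]
  -- denominator / t → 2
  have hD : Tendsto (fun t => (t + Real.sqrt ((p t)^2 + (q t)^2)) * t⁻¹) atTop
      (nhds 2) := by
    have h1 : Tendsto (fun t => t * t⁻¹ + Real.sqrt ((p t)^2 + (q t)^2) * t⁻¹) atTop
        (nhds (1 + 1)) := by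
      refine Tendsto.add ?_ hr
      refine tendsto_const_nhds.congr' ?_
      filter_upwards [ht0] with t ht
      rw [mul_inv_cancel₀ (ne_of_gt ht)]
    rw [show (1:ℝ) + 1 = 2 by norm_num] at h1
    exact h1.congr' (by filter_upwards [ht0] with t ht; ring)
  have hfin := hN.div hD (by norm_num)
  rw [show 2*(c*b₁ + s*b₂) / 2 = c*b₁ + s*b₂ by ring] at hfin
  refine hfin.congr' ?_
  filter_upwards [ht0] with t ht
  set r := Real.sqrt ((p t)^2 + (q t)^2) with hrdef
  have hr0 : 0 ≤ r := Real.sqrt_nonneg _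
  have hrsq : r^2 = (p t)^2 + (q t)^2 := Real.sq_sqrt (by positivity)
  have htr : 0 < t + r := by linarith
  have ht' : t ≠ 0 := ne_of_gt ht
  simp only [Pi.div_apply]
  rw [div_eq_iff (ne_of_gt (by positivity : (0:ℝ) < (t + r) * t⁻¹))]
  have : t^2 - (p t)^2 - (q t)^2 = (t - r) * (t + r) := by
    linear_combination hrsq
  rw [this]; ring


/-- In `ℍ² × ℍ²` (ℓ² product), for boundary points `x = (x₁,x₂,α)`, `y = (y₁,y₂,α)` of the
same type `α ∈ [0, π/2)`, the Gromov product with base point `o = (o₁,o₂)` is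
`(x|y)_{o,α} = cos(α)(x₁|y₁)_{o₁} + sin(α)(x₂|y₂)_{o₂}`, provided the rank-one Gromov
products `(x₁|y₁)_{o₁}`, `(x₂|y₂)_{o₂}` are finite.  Boundary points and rays are encoded
by unit-speed geodesic rays `γx₁ = γ_{o₁x₁}`, `γy₁ = γ_{o₁y₁}` in the first factor and
`γx₂ = γ_{o₂x₂}`, `γy₂ = γ_{o₂y₂}` in the second, so that the ray from `o` to `x` is
`t ↦ (γx₁(cos(α)t), γx₂(sin(α)t))`. -/
theorem gromov_product_H2_times_H2 (α : ℝ) (hα : α ∈ Set.Ico 0 (π/2))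
    (o₁ o₂ : UpperHalfPlane) (γx₁ γy₁ γx₂ γy₂ : ℝ → UpperHalfPlane)
    (hx₁0 : γx₁ 0 = o₁) (hy₁0 : γy₁ 0 = o₁) (hx₂0 : γx₂ 0 = o₂) (hy₂0 : γy₂ 0 = o₂)
    (hx₁ : ∀ s t : ℝ, 0 ≤ s → 0 ≤ t → dist (γx₁ s) (γx₁ t) = |s - t|)
    (hy₁ : ∀ s t : ℝ, 0 ≤ s → 0 ≤ t → dist (γy₁ s) (γy₁ t) = |s - t|)
    (hx₂ : ∀ s t : ℝ, 0 ≤ s → 0 ≤ t → dist (γx₂ s) (γx₂ t) = |s - t|)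
    (hy₂ : ∀ s t : ℝ, 0 ≤ s → 0 ≤ t → dist (γy₂ s) (γy₂ t) = |s - t|)
    (a₁ a₂ : ℝ)
    (h₁ : Tendsto (fun t : ℝ => t - (1/2) * dist (γx₁ t) (γy₁ t)) atTop (nhds a₁))
    (h₂ : Tendsto (fun t : ℝ => t - (1/2) * dist (γx₂ t) (γy₂ t)) atTop (nhds a₂)) :
    Tendsto (fun t : ℝ => t - (1/2) *
        Real.sqrt ((dist (γx₁ (Real.cos α * t)) (γy₁ (Real.cos α * t)))^2 +
          (dist (γx₂ (Real.sin α * t)) (γy₂ (Real.sin α * t)))^2))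
      atTop (nhds (Real.cos α * a₁ + Real.sin α * a₂)) := by
  set c := Real.cos α with hc
  set s := Real.sin α with hs
  have hcpos : 0 < c := Real.cos_pos_of_mem_Ioo
    ⟨by linarith [hα.1, pi_pos], hα.2⟩
  have hsnn : 0 ≤ s := Real.sin_nonneg_of_nonneg_of_le_pi hα.1
    (by linarith [hα.2, pi_pos])
  have hcs : c^2 + s^2 = 1 := by
    rw [hc, hs]; exact Real.cos_sq_add_sin_sq α
  set p : ℝ → ℝ := fun t => dist (γx₁ (c * t)) (γy₁ (c * t)) / 2 with hpdef
  set q : ℝ → ℝ := fun t => dist (γx₂ (s * t)) (γy₂ (s * t)) / 2 with hqdef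
  have hp : Tendsto (fun t => c * t - p t) atTop (nhds a₁) := by
    have hct : Tendsto (fun t : ℝ => c * t) atTop atTop :=
      Tendsto.const_mul_atTop hcpos tendsto_id
    have := h₁.comp hct
    refine this.congr fun t => ?_
    simp only [Function.comp, hpdef]
    ring
  -- second coordinate, with b₂ depending on whether s = 0
  rcases eq_or_lt_of_le hsnn with hs0 | hs0
  · -- s = 0
    have hq : Tendsto (fun t => s * t - q t) atTop (nhds 0) := by
      refine tendsto_const_nhds.congr fun t => ?_
      simp only [hqdef, ← hs0, zero_mul, hx₂0, hy₂0, dist_self]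
      norm_num
    have hmain := aux_gromov_limit c s a₁ 0 hcs p q hp hq
    have heq : c * a₁ + s * 0 = c * a₁ + s * a₂ := by rw [← hs0]; ring
    rw [heq] at hmain
    refine hmain.congr fun t => ?_
    simp only [hpdef, hqdef]
    rw [show (dist (γx₁ (c*t)) (γy₁ (c*t)) / 2)^2 + (dist (γx₂ (s*t)) (γy₂ (s*t)) / 2)^2
        = ((dist (γx₁ (c*t)) (γy₁ (c*t)))^2 + (dist (γx₂ (s*t)) (γy₂ (s*t)))^2) * (1/2)^2
        by ring,
      Real.sqrt_mul (by positivity), Real.sqrt_sq (by norm_num)]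
    ring
  · -- s > 0
    have hq : Tendsto (fun t => s * t - q t) atTop (nhds a₂) := by
      have hst : Tendsto (fun t : ℝ => s * t) atTop atTop :=
        Tendsto.const_mul_atTop hs0 tendsto_id
      have := h₂.comp hst
      refine this.congr fun t => ?_
      simp only [Function.comp, hqdef]
      ring
    have hmain := aux_gromov_limit c s a₁ a₂ hcs p q hp hq
    refine hmain.congr fun t => ?_
    simp only [hpdef, hqdef]
    rw [show (dist (γx₁ (c*t)) (γy₁ (c*t)) / 2)^2 + (dist (γx₂ (s*t)) (γy₂ (s*t)) / 2)^2
        = ((dist (γx₁ (c*t)) (γy₁ (c*t)))^2 + (dist (γx₂ (s*t)) (γy₂ (s*t)))^2) * (1/2)^2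
        by ring,
      Real.sqrt_mul (by positivity), Real.sqrt_sq (by norm_num)]
    ring
end

section
/- Let S be a set, G : S × S → ℝ ∪ {∞} a function, cr the associated cross ratio cr(x,y,z,w) = −G(x,y) − G(z,w) + G(x,w) + G(z,y) (defined whenever at most the terms entering with negative sign are infinite, with conventions as in the paper), and say x op y iff G(x,y) < ∞. Let f : S → S' be a map to another set with Gromov product G' and cross ratio cr', such that cr(x,y,z,w) = cr'(f(x),f(y),f(z),f(w)) whenever defined. Assume op and op' satisfy: for all x, y ∈ S there exists z with z op x and z op y (and similarly in S'), and for all x ≠ y there exists a with a op x and ¬(a op y). Then f is injective. -/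
/-!
If `f x = f y` with `x ≠ y`, pick `a` opposite to `x` but not to `y`, and `p` opposite to both.
Then `cr(p, x, a, y) = -∞` while `cr(p, x, a, x) = 0`; both are defined, and `f` sends them to
the same cross ratio `cr'(f p, f x, f a, f x)`.
-/

section

variable {α : Type*}

noncomputable def crossRatio (G : α → α → EReal) (x y z w : α) : EReal :=
  G x w + G z y - G x y - G z w

theorem crossRatio_eq_bot_of_eq_top {G : α → α → EReal} {x y z w : α} (h : G z w = ⊤) :
    crossRatio G x y z w = ⊥ := by
  rw [crossRatio, h, EReal.sub_top]

theorem crossRatio_diag_eq_zero {G : α → α → EReal} {x y z : α}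
    (hxy : G x y ≠ ⊤) (hxy' : G x y ≠ ⊥) (hzy : G z y ≠ ⊤) (hzy' : G z y ≠ ⊥) :
    crossRatio G x y z y = 0 := by
  unfold crossRatio
  lift G x y to ℝ using ⟨hxy, hxy'⟩ with u
  lift G z y to ℝ using ⟨hzy, hzy'⟩ with v
  norm_cast
  ring

end

theorem moebius_map_injective_general {S S' : Type*}
    (G : S → S → EReal) (G' : S' → S' → EReal)
    (hG : ∀ x y, G x y ≠ ⊥)
    (f : S → S')
    (hpres : ∀ x y z w : S, G x w ≠ ⊤ → G z y ≠ ⊤ →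
      G x w + G z y - G x y - G z w
        = G' (f x) (f w) + G' (f z) (f y) - G' (f x) (f y) - G' (f z) (f w))
    (hjoin : ∀ x y : S, ∃ z : S, G z x ≠ ⊤ ∧ G z y ≠ ⊤)
    (hsep : ∀ x y : S, x ≠ y → ∃ a : S, G a x ≠ ⊤ ∧ G a y = ⊤) :
    Function.Injective f := by
  intro x y hxy
  by_contra hne
  obtain ⟨a, hax, hay⟩ := hsep x y hne
  obtain ⟨p, hpy, hpx⟩ := hjoin y x
  have h : (⊥ : EReal) = 0 :=
    calc (⊥ : EReal)
        = crossRatio G p x a y := (crossRatio_eq_bot_of_eq_top hay).symm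
      _ = crossRatio G' (f p) (f x) (f a) (f y) := hpres p x a y hpy hax
      _ = crossRatio G' (f p) (f x) (f a) (f x) := by rw [hxy]
      _ = crossRatio G p x a x := (hpres p x a x hpx hax).symm
      _ = 0 := crossRatio_diag_eq_zero hpx (hG p x) hax (hG a x)
  exact EReal.bot_ne_zero h

/-- Moebius maps are injective.  Here `G : S × S → ℝ ∪ {∞}` (valued in `EReal`, never
`−∞`) is a Gromov product, `x op y` iff `G x y < ∞ = ⊤`, and the cross ratio is
`cr(x,y,z,w) = G(x,w) + G(z,y) − G(x,y) − G(z,w)`, defined whenever at most the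
negatively-signed terms are infinite, i.e. `G x w ≠ ⊤` and `G z y ≠ ⊤`.  Assume:
`f` preserves the cross ratio whenever defined; any two elements admit a common
opposite (on both sides); and distinct elements are separated by opposition.  Then `f`
is injective. -/
theorem moebius_map_injective {S S' : Type*}
    (G : S → S → EReal) (G' : S' → S' → EReal)
    (hG : ∀ x y, G x y ≠ ⊥) (hG' : ∀ x y, G' x y ≠ ⊥)
    (f : S → S')
    (hpres : ∀ x y z w : S, G x w ≠ ⊤ → G z y ≠ ⊤ →
      G x w + G z y - G x y - G z w
        = G' (f x) (f w) + G' (f z) (f y) - G' (f x) (f y) - G' (f z) (f w))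
    (hjoin : ∀ x y : S, ∃ z : S, G z x ≠ ⊤ ∧ G z y ≠ ⊤)
    (hjoin' : ∀ x y : S', ∃ z : S', G' z x ≠ ⊤ ∧ G' z y ≠ ⊤)
    (hsep : ∀ x y : S, x ≠ y → ∃ a : S, G a x ≠ ⊤ ∧ G a y = ⊤) :
    Function.Injective f :=
  moebius_map_injective_general G G' hG f hpres hjoin hsep
end
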